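/- The set 𝒞₃,₃(Q₂) of 3×3 communication matrices implementable with a qubit is not convex: there exist C, C′ implementable with qubit states and POVMs such that (C+C′)/2 is not qubit-implementable. -/

import Mathlib

open Matrix BigOperators
open scoped ComplexOrder

/-- A quantum (dimension-d) implementation of a communication matrix `C`:
states `ρ` are density matrices, `M` is a POVM, and `C a b = tr(ρ_a M(b))`. -/
def QImpl {d n m : ℕ} (C : Matrix (Fin n) (Fin m) ℝ)
    (ρ : Fin n → Matrix (Fin d) (Fin d) ℂ) (M : Fin m → Matrix (Fin d) (Fin d) ℂ) : Prop :=
  (∀ a, (ρ a).PosSemidef) ∧ (∀ a, (ρ a).trace = 1) ∧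
  (∀ b, (M b).PosSemidef) ∧ (∑ b, M b) = 1 ∧
  ∀ a b, (C a b : ℂ) = (ρ a * M b).trace
/-- A matrix is qubit-implementable if it has a quantum implementation in dimension 2. -/
def QubitImplementable {n m : ℕ} (C : Matrix (Fin n) (Fin m) ℝ) : Prop :=
  ∃ (ρ : Fin n → Matrix (Fin 2) (Fin 2) ℂ) (M : Fin m → Matrix (Fin 2) (Fin 2) ℂ),
    QImpl C ρ M

/-!
If a qubit state `ρ` and an effect `M` satisfy `tr(ρ M) = 0`, then `ρ M = 0`, and the
polarized Cayley–Hamilton identity for `2 × 2` matrices turns this into `M = tr(M) (1 - ρ)`.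
Hence, in a qubit implementation of a `3 × 3` matrix `C` with zeros at `(0,1)`, `(1,2)`, `(2,0)`,
every entry factors as `C a b = tr(M_b) (1 - tr(ρ_a ρ_c))` where `C c b = 0`, and the symmetry of
`tr(ρ_a ρ_c)` forces `C 0 0 * C 1 1 * C 2 2 = C 1 0 * C 2 1 * C 0 2`. The average of the
qubit-implementable matrices `[[1,0,0],[1,0,0],[0,1/2,1/2]]` and
`[[2/3,0,1/3],[3/4,1/4,0],[0,2/5,3/5]]` has this zero pattern, but
`5/6 * 1/8 * 11/20 ≠ 7/8 * 9/20 * 1/6`.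
-/

namespace Matrix

variable {𝕜 : Type*} [RCLike 𝕜]

open scoped MatrixOrder in
theorem PosSemidef.mul_eq_zero_of_trace_mul_eq_zero {n : Type*} [Fintype n]
    {A B : Matrix n n 𝕜} (hA : A.PosSemidef) (hB : B.PosSemidef) (h : (A * B).trace = 0) :
    A * B = 0 := by
  classical
  -- `tr (Xᴴ X Yᴴ Y)` is the squared Frobenius norm of `X Yᴴ`.
  obtain ⟨X, rfl⟩ := CStarAlgebra.nonneg_iff_eq_star_mul_self.mp hA.nonneg
  obtain ⟨Y, rfl⟩ := CStarAlgebra.nonneg_iff_eq_star_mul_self.mp hB.nonneg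
  simp only [star_eq_conjTranspose] at h ⊢
  have hXY : X * Yᴴ = 0 := by
    rw [← trace_conjTranspose_mul_self_eq_zero_iff, ← h, conjTranspose_mul,
      conjTranspose_conjTranspose, Matrix.mul_assoc, trace_mul_comm]
    simp only [Matrix.mul_assoc]
  calc Xᴴ * X * (Yᴴ * Y) = Xᴴ * (X * Yᴴ) * Y := by simp only [Matrix.mul_assoc]
    _ = 0 := by rw [hXY, Matrix.mul_zero, Matrix.zero_mul]

/-- Polarization of the Cayley–Hamilton identity `A ^ 2 = tr A • A - det A • 1`. -/
theorem mul_add_mul_fin_two {R : Type*} [CommRing R] (A B : Matrix (Fin 2) (Fin 2) R) :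
    A * B + B * A = A.trace • B + B.trace • A + ((A * B).trace - A.trace * B.trace) • 1 := by
  ext i j
  fin_cases i <;> fin_cases j <;>
    simp only [Fin.zero_eta, Fin.mk_one, Fin.isValue, add_apply, smul_apply, smul_eq_mul,
      mul_apply, Fin.sum_univ_two, trace_fin_two, one_apply_eq, one_apply_ne, ne_eq, zero_ne_one,
      one_ne_zero, not_false_eq_true, mul_one, mul_zero, add_zero] <;> ring

theorem IsHermitian.posSemidef_of_fin_two {A : Matrix (Fin 2) (Fin 2) 𝕜} (hA : A.IsHermitian)
    (htr : 0 ≤ A.trace) (hdet : 0 ≤ A.det) : A.PosSemidef := by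
  rw [hA.posSemidef_iff_eigenvalues_nonneg]
  have hsum : 0 ≤ hA.eigenvalues 0 + hA.eigenvalues 1 := by
    rw [hA.trace_eq_sum_eigenvalues, Fin.sum_univ_two] at htr
    exact_mod_cast htr
  have hprod : 0 ≤ hA.eigenvalues 0 * hA.eigenvalues 1 := by
    rw [hA.det_eq_prod_eigenvalues, Fin.prod_univ_two] at hdet
    exact_mod_cast hdet
  rw [Pi.le_def, Fin.forall_fin_two, Pi.zero_apply, Pi.zero_apply]
  constructor <;> nlinarith

theorem PosSemidef.eq_trace_smul_one_sub_of_trace_mul_eq_zero {ρ M : Matrix (Fin 2) (Fin 2) 𝕜}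
    (hρ : ρ.PosSemidef) (hρ1 : ρ.trace = 1) (hM : M.PosSemidef) (h : (ρ * M).trace = 0) :
    M = M.trace • (1 - ρ) := by
  have hρM : ρ * M = 0 := hρ.mul_eq_zero_of_trace_mul_eq_zero hM h
  have hMρ : M * ρ = 0 := by
    rw [← hM.isHermitian.eq, ← hρ.isHermitian.eq, ← conjTranspose_mul, hρM,
      conjTranspose_zero]
  have hCH := mul_add_mul_fin_two ρ M
  rw [h, hρM, hMρ, hρ1] at hCH
  linear_combination (norm := module) -hCH

end Matrix

theorem QImpl.apply_eq_of_apply_eq_zero {n m : ℕ} {C : Matrix (Fin n) (Fin m) ℝ}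
    {ρ : Fin n → Matrix (Fin 2) (Fin 2) ℂ} {M : Fin m → Matrix (Fin 2) (Fin 2) ℂ}
    (h : QImpl C ρ M) {c : Fin n} {b : Fin m} (hcb : C c b = 0) (a : Fin n) :
    (C a b : ℂ) = (M b).trace * (1 - (ρ a * ρ c).trace) := by
  obtain ⟨hρ, hρ1, hM, -, hC⟩ := h
  have hzero : (ρ c * M b).trace = 0 := by rw [← hC, hcb, Complex.ofReal_zero]
  have hMb := (hρ c).eq_trace_smul_one_sub_of_trace_mul_eq_zero (hρ1 c) (hM b) hzero
  calc (C a b : ℂ) = (ρ a * ((M b).trace • (1 - ρ c))).trace := by rw [← hMb, hC]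
    _ = (M b).trace * (1 - (ρ a * ρ c).trace) := by
      rw [Matrix.mul_smul, trace_smul, Matrix.mul_sub, Matrix.mul_one, trace_sub, hρ1,
        smul_eq_mul]

theorem QubitImplementable.diag_prod_eq {C : Matrix (Fin 3) (Fin 3) ℝ}
    (hC : QubitImplementable C) (h01 : C 0 1 = 0) (h12 : C 1 2 = 0) (h20 : C 2 0 = 0) :
    C 0 0 * C 1 1 * C 2 2 = C 1 0 * C 2 1 * C 0 2 := by
  obtain ⟨ρ, M, h⟩ := hC
  have hcast : (C 0 0 * C 1 1 * C 2 2 : ℂ) = C 1 0 * C 2 1 * C 0 2 := by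
    rw [h.apply_eq_of_apply_eq_zero h20 0, h.apply_eq_of_apply_eq_zero h20 1,
      h.apply_eq_of_apply_eq_zero h01 1, h.apply_eq_of_apply_eq_zero h01 2,
      h.apply_eq_of_apply_eq_zero h12 2, h.apply_eq_of_apply_eq_zero h12 0,
      trace_mul_comm (ρ 0) (ρ 2), trace_mul_comm (ρ 1) (ρ 0), trace_mul_comm (ρ 2) (ρ 1)]
    ring
  exact_mod_cast hcast

theorem qubitImplementable_example₁ : QubitImplementable !![(1:ℝ),0,0;1,0,0;0,1/2,1/2] := by
  refine ⟨![!![1,0;0,0], !![1,0;0,0], !![0,0;0,1]],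
    ![!![1,0;0,0], !![0,0;0,1/2], !![0,0;0,1/2]],
    fun a => ?_, fun a => ?_, fun b => ?_, ?_, fun a b => ?_⟩
  · fin_cases a <;> refine IsHermitian.posSemidef_of_fin_two ?_ ?_ ?_ <;>
      norm_num [IsHermitian, trace_fin_two, det_fin_two, ← Matrix.ext_iff, Fin.forall_fin_two]
  · fin_cases a <;> norm_num [trace_fin_two]
  · fin_cases b <;> refine IsHermitian.posSemidef_of_fin_two ?_ ?_ ?_ <;>
      norm_num [IsHermitian, trace_fin_two, det_fin_two, ← Matrix.ext_iff, Fin.forall_fin_two,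
        map_ofNat] <;> positivity
  · ext i j
    fin_cases i <;> fin_cases j <;> norm_num [Fin.sum_univ_three, Matrix.cons_val_two, Matrix.tail_cons, Matrix.head_cons]
  · fin_cases a <;> fin_cases b <;> norm_num [trace_fin_two]

theorem qubitImplementable_example₂ :
    QubitImplementable !![(2:ℝ)/3,0,1/3;3/4,1/4,0;0,2/5,3/5] := by
  refine ⟨![!![1/2,1/2;1/2,1/2], !![1,0;0,0], !![1/10,-3/10;-3/10,9/10]],
    ![!![3/4,1/4;1/4,1/12], !![1/4,-1/4;-1/4,1/4], !![0,0;0,2/3]],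
    fun a => ?_, fun a => ?_, fun b => ?_, ?_, fun a b => ?_⟩
  · fin_cases a <;> refine IsHermitian.posSemidef_of_fin_two ?_ ?_ ?_ <;>
      norm_num [IsHermitian, trace_fin_two, det_fin_two, ← Matrix.ext_iff, Fin.forall_fin_two,
        map_ofNat]
  · fin_cases a <;> norm_num [trace_fin_two]
  · fin_cases b <;> refine IsHermitian.posSemidef_of_fin_two ?_ ?_ ?_ <;>
      norm_num [IsHermitian, trace_fin_two, det_fin_two, ← Matrix.ext_iff, Fin.forall_fin_two,
        map_ofNat] <;> positivity
  · ext i j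
    fin_cases i <;> fin_cases j <;>
      norm_num [Fin.sum_univ_three, Matrix.cons_val_two, Matrix.tail_cons, Matrix.head_cons]
  · fin_cases a <;> fin_cases b <;> norm_num [trace_fin_two]

/-- The set of 3×3 qubit-implementable communication matrices is not convex. -/
theorem qubit_comm_matrices_not_convex :
    ∃ C C' : Matrix (Fin 3) (Fin 3) ℝ, QubitImplementable C ∧ QubitImplementable C' ∧
      ¬ QubitImplementable ((1/2 : ℝ) • C + (1/2 : ℝ) • C') := by
  refine ⟨_, _, qubitImplementable_example₁, qubitImplementable_example₂, fun h => ?_⟩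
  have hprod := h.diag_prod_eq (by simp) (by simp) (by simp)
  norm_num [Matrix.cons_val_two, Matrix.tail_cons, Matrix.head_cons] at hprod
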